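/- arXiv:alg-geom/9712021 — 5 statements merged into one kernel-verified Lean document; each statement's English description precedes it below -/
import Mathlib

section
/- Let B be a big subset of a group G, i.e. for any g₁,g₂,g₃ ∈ G the intersection B⁻¹ ∩ Bg₁ ∩ Bg₂ ∩ Bg₃ is non-empty. Then G is generated by B. -/
open Pointwise in
theorem Subgroup.closure_eq_top_of_inv_mul_eq_univ {G : Type*} [Group G] {B : Set G}
    (h : B⁻¹ * B = Set.univ) : Subgroup.closure B = ⊤ := by
  refine eq_top_iff.2 fun g _ => ?_
  obtain ⟨a, ha, b, hb, rfl⟩ : g ∈ B⁻¹ * B := h ▸ Set.mem_univ g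
  have ha' : a⁻¹⁻¹ ∈ Subgroup.closure B := inv_mem (Subgroup.subset_closure ha)
  exact mul_mem (inv_inv a ▸ ha') (Subgroup.subset_closure hb)

open Pointwise in
theorem Set.inv_mul_eq_univ_of_forall_exists_mul_inv_mem {G : Type*} [Group G] {B : Set G}
    (h : ∀ g : G, ∃ x ∈ B, x * g⁻¹ ∈ B) : B⁻¹ * B = Set.univ := by
  refine Set.eq_univ_of_forall fun g => ?_
  obtain ⟨x, hx, hxg⟩ := h g
  exact ⟨(x * g⁻¹)⁻¹, Set.inv_mem_inv.2 hxg, x, hx, by group⟩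

/-- If `B` is a big subset of a group `G` (i.e. for all `g₁ g₂ g₃ ∈ G` the set
`B⁻¹ ∩ Bg₁ ∩ Bg₂ ∩ Bg₃` is nonempty, where `Bg = {bg : b ∈ B}`),
then `B` generates `G`. -/
theorem stmt_2 {G : Type*} [Group G] (B : Set G)
    (hB : ∀ g₁ g₂ g₃ : G,
      (B⁻¹ ∩ {x | x * g₁⁻¹ ∈ B} ∩ {x | x * g₂⁻¹ ∈ B} ∩ {x | x * g₃⁻¹ ∈ B}).Nonempty) :
    Subgroup.closure B = ⊤ := by
  refine Subgroup.closure_eq_top_of_inv_mul_eq_univ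
    (Set.inv_mul_eq_univ_of_forall_exists_mul_inv_mem fun g => ?_)
  obtain ⟨x, ⟨⟨-, hxg⟩, hx⟩, -⟩ := hB g 1 1
  exact ⟨x, by simpa using hx, hxg⟩
end

section
/- Let B be a big subset of a group G and let c : G × G → C be a 2-cocycle with values in an abelian group C (with trivial G-action) such that c(b₁, b₂) = 1 whenever b₁, b₂, and b₁b₂ all lie in B. Then c is a coboundary. -/
/-!
A cocycle `c` makes `C × G` a semigroup under `(a, g) * (a', g') = (a a' c(g, g'), g g')`
(associativity is the cocycle identity), and the hypothesis on `c` says that `σ b = (1, b)` is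
multiplicative on `B`. For big `B`, every map `σ` multiplicative on `B` extends to a homomorphism
`φ k = σ t⁻¹ * σ (t k)`, for any `t` with `t⁻¹, t k ∈ B`: a common such `t` for `a`, `a'` and
`a b = a' b'` shows that `σ a * σ b` depends only on `a b`. Since `G = B B`, `φ` is a section of
the projection to `G`, so `φ g = (f(g)⁻¹, g)`, and the first components of `φ(g) φ(h) = φ(g h)`
give `c(g, h) = f(g) f(h) f(g h)⁻¹`.
-/

def IsBig {G : Type*} [Group G] (B : Set G) : Prop :=
  ∀ g₁ g₂ g₃ : G,
    (B⁻¹ ∩ {x | x * g₁⁻¹ ∈ B} ∩ {x | x * g₂⁻¹ ∈ B} ∩ {x | x * g₃⁻¹ ∈ B}).Nonempty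

def IsMulHomOn {G H : Type*} [Mul G] [Mul H] (B : Set G) (σ : G → H) : Prop :=
  ∀ b₁ ∈ B, ∀ b₂ ∈ B, b₁ * b₂ ∈ B → σ (b₁ * b₂) = σ b₁ * σ b₂

namespace IsBig

variable {G H : Type*} [Group G] [Semigroup H] {B : Set G} {σ : G → H}

theorem exists_mul_mem (hB : IsBig B) (g₁ g₂ g₃ : G) :
    ∃ t, t⁻¹ ∈ B ∧ t * g₁ ∈ B ∧ t * g₂ ∈ B ∧ t * g₃ ∈ B := by
  obtain ⟨t, ⟨⟨ht, h₁⟩, h₂⟩, h₃⟩ := hB g₁⁻¹ g₂⁻¹ g₃⁻¹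
  simp only [Set.mem_ofPred_eq, inv_inv] at h₁ h₂ h₃
  exact ⟨t, ht, h₁, h₂, h₃⟩

theorem closure_eq_top (hB : IsBig B) : Subsemigroup.closure B = ⊤ := by
  refine eq_top_iff.2 fun g _ => ?_
  obtain ⟨t, ht, htg, -⟩ := hB.exists_mul_mem g g g
  simpa using Subsemigroup.mul_mem _ (Subsemigroup.subset_closure ht)
    (Subsemigroup.subset_closure htg)

theorem mul_eq_mul_of_isMulHomOn (hB : IsBig B) (hσ : IsMulHomOn B σ)
    {a b a' b' : G} (ha : a ∈ B) (hb : b ∈ B) (ha' : a' ∈ B) (hb' : b' ∈ B)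
    (h : a * b = a' * b') : σ a * σ b = σ a' * σ b' := by
  obtain ⟨t, ht, hta, hta', htab⟩ := hB.exists_mul_mem a a' (a * b)
  have through_t : ∀ {x y}, x ∈ B → y ∈ B → t * x ∈ B → t * (x * y) ∈ B →
      σ x * σ y = σ t⁻¹ * σ (t * (x * y)) := fun {x y} hx hy htx htxy => by
    have hσx : σ t⁻¹ * σ (t * x) = σ x := by
      simpa using (hσ _ ht _ htx (by simpa using hx)).symm
    rw [← hσx, mul_assoc, ← hσ _ htx _ hy (by rwa [mul_assoc]), mul_assoc]
  rw [through_t ha hb hta htab, h, through_t ha' hb' hta' (by rwa [← h])]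

noncomputable def extend (hB : IsBig B) (σ : G → H) (k : G) : H :=
  σ (hB.exists_mul_mem k k k).choose⁻¹ * σ ((hB.exists_mul_mem k k k).choose * k)

theorem extend_eq (hB : IsBig B) (hσ : IsMulHomOn B σ) {t k : G} (ht : t⁻¹ ∈ B) (htk : t * k ∈ B) :
    hB.extend σ k = σ t⁻¹ * σ (t * k) := by
  obtain ⟨hs, hsk, -⟩ := (hB.exists_mul_mem k k k).choose_spec
  exact hB.mul_eq_mul_of_isMulHomOn hσ hs hsk ht htk (by simp)

theorem extend_of_mem (hB : IsBig B) (hσ : IsMulHomOn B σ) {b : G} (hb : b ∈ B) :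
    hB.extend σ b = σ b := by
  obtain ⟨t, ht, htb, -⟩ := hB.exists_mul_mem b b b
  simpa [hB.extend_eq hσ ht htb] using (hσ _ ht _ htb (by simpa using hb)).symm

theorem extend_mul_of_mem (hB : IsBig B) (hσ : IsMulHomOn B σ) (k : G) {a : G} (ha : a ∈ B) :
    hB.extend σ (k * a) = hB.extend σ k * σ a := by
  obtain ⟨t, ht, htk, htka, -⟩ := hB.exists_mul_mem k (k * a) k
  rw [hB.extend_eq hσ ht htka, hB.extend_eq hσ ht htk, mul_assoc, ← mul_assoc t,
    ← hσ _ htk _ ha (by rwa [mul_assoc])]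

theorem extend_mul (hB : IsBig B) (hσ : IsMulHomOn B σ) (k₁ k₂ : G) :
    hB.extend σ (k₁ * k₂) = hB.extend σ k₁ * hB.extend σ k₂ := by
  obtain ⟨t, ht, htk, -⟩ := hB.exists_mul_mem k₂ k₂ k₂
  calc hB.extend σ (k₁ * k₂) = hB.extend σ (k₁ * t⁻¹ * (t * k₂)) := by group
    _ = hB.extend σ k₁ * (σ t⁻¹ * σ (t * k₂)) := by
      rw [hB.extend_mul_of_mem hσ _ htk, hB.extend_mul_of_mem hσ _ ht, mul_assoc]
    _ = hB.extend σ k₁ * hB.extend σ k₂ := by rw [hB.extend_eq hσ ht htk]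

theorem exists_mulHom_eqOn (hB : IsBig B) (hσ : IsMulHomOn B σ) :
    ∃ φ : G →ₙ* H, Set.EqOn φ σ B :=
  ⟨⟨hB.extend σ, hB.extend_mul hσ⟩, fun _ hb => hB.extend_of_mem hσ hb⟩

end IsBig

@[ext]
structure TwistedProd {G : Type*} (C : Type*) (c : G → G → C) where
  fst : C
  snd : G

namespace TwistedProd

variable {G C : Type*} {c : G → G → C}

section Mul

variable [Mul G] [Mul C]

instance : Mul (TwistedProd C c) := ⟨fun x y => ⟨x.fst * y.fst * c x.snd y.snd, x.snd * y.snd⟩⟩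

@[simp] theorem fst_mul (x y : TwistedProd C c) :
    (x * y).fst = x.fst * y.fst * c x.snd y.snd := rfl

@[simp] theorem snd_mul (x y : TwistedProd C c) : (x * y).snd = x.snd * y.snd := rfl

def sndMulHom : TwistedProd C c →ₙ* G := ⟨snd, snd_mul⟩

end Mul

abbrev semigroup [Semigroup G] [CommSemigroup C]
    (hc : ∀ g₁ g₂ g₃ : G, c g₁ g₂ * c (g₁ * g₂) g₃ = c g₂ g₃ * c g₁ (g₂ * g₃)) :
    Semigroup (TwistedProd C c) where
  mul_assoc x y z := by
    ext
    · calc x.fst * y.fst * c x.snd y.snd * z.fst * c (x.snd * y.snd) z.snd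
          = x.fst * y.fst * z.fst * (c x.snd y.snd * c (x.snd * y.snd) z.snd) := by ac_rfl
        _ = x.fst * y.fst * z.fst * (c y.snd z.snd * c x.snd (y.snd * z.snd)) := by rw [hc]
        _ = x.fst * (y.fst * z.fst * c y.snd z.snd) * c x.snd (y.snd * z.snd) := by ac_rfl
    · exact mul_assoc _ _ _

theorem isMulHomOn_mk_one [Mul G] [MulOneClass C] {B : Set G}
    (hcB : ∀ b₁ b₂ : G, b₁ ∈ B → b₂ ∈ B → b₁ * b₂ ∈ B → c b₁ b₂ = 1) :
    IsMulHomOn B (fun b => (⟨1, b⟩ : TwistedProd C c)) := fun b₁ hb₁ b₂ hb₂ hb₁₂ => by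
  ext <;> simp [hcB b₁ b₂ hb₁ hb₂ hb₁₂]

end TwistedProd

/-- Let `B` be a big subset of a group `G` and `c : G × G → C` a 2-cocycle with
values in an abelian group `C` (trivial `G`-action) such that `c(b₁,b₂) = 1`
whenever `b₁, b₂, b₁b₂ ∈ B`.  Then `c` is a coboundary. -/
theorem stmt_3 {G C : Type*} [Group G] [CommGroup C] (B : Set G)
    (hB : ∀ g₁ g₂ g₃ : G,
      (B⁻¹ ∩ {x | x * g₁⁻¹ ∈ B} ∩ {x | x * g₂⁻¹ ∈ B} ∩ {x | x * g₃⁻¹ ∈ B}).Nonempty)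
    (c : G → G → C)
    (hcoc : ∀ g₁ g₂ g₃ : G, c g₁ g₂ * c (g₁ * g₂) g₃ = c g₂ g₃ * c g₁ (g₂ * g₃))
    (hcB : ∀ b₁ b₂ : G, b₁ ∈ B → b₂ ∈ B → b₁ * b₂ ∈ B → c b₁ b₂ = 1) :
    ∃ f : G → C, ∀ g h : G, c g h = f g * f h * (f (g * h))⁻¹ := by
  let := TwistedProd.semigroup hcoc
  have hB : IsBig B := hB
  obtain ⟨φ, hφ⟩ := hB.exists_mulHom_eqOn (TwistedProd.isMulHomOn_mk_one hcB)
  have hsection : TwistedProd.sndMulHom.comp φ = MulHom.id G :=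
    MulHom.eq_of_eqOn_dense hB.closure_eq_top fun b hb => by
      simp [TwistedProd.sndMulHom, hφ hb]
  refine ⟨fun g => (φ g).fst⁻¹, fun g h => ?_⟩
  have hsnd (k : G) : (φ k).snd = k := DFunLike.congr_fun hsection k
  change c g h = (φ g).fst⁻¹ * (φ h).fst⁻¹ * (φ (g * h)).fst⁻¹⁻¹
  rw [map_mul, TwistedProd.fst_mul, hsnd, hsnd, inv_inv, ← mul_inv, inv_mul_cancel_left]
end

section
/- Let R be the ring of integers of a number field, J and Ĵ fractional ideals of R with J·Ĵ ⊆ R, and I ⊆ J·Ĵ a non-zero ideal of R. Then the reduction homomorphism from Γ(J,Ĵ) to the group of matrices (ā₁₁, ā₁₂; ā₂₁, ā₂₂) with ā₁₁, ā₂₂ ∈ R/I, ā₁₂ ∈ J/IJ, ā₂₁ ∈ Ĵ/IĴ and ā₁₁ā₂₂ − ā₁₂ā₂₁ = 1 is surjective. -/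
open NumberField FractionalIdeal nonZeroDivisors

/-!
Lift the entries one at a time. First move `a₁₂` within its class modulo `IJ` to some
`c ≠ 0`, so that `N = c Ĵ` is a non-zero integral ideal. The congruence
`a₁₁ a₂₂ - c a₂₁ ≡ 1 (mod I)` makes `a₁₁` coprime to `N + I`, and since `N` has only finitely
many prime factors, the Chinese remainder theorem moves `a₁₁` within its class modulo `I` to some
`x` coprime to `N`, i.e. `x u + c w = 1` with `u ∈ R`, `w ∈ Ĵ`. If `δ ∈ I` is the remaining
defect `x a₂₂ - c a₂₁ - 1`, replacing `(a₂₂, a₂₁)` by `(a₂₂ - u δ, a₂₁ + w δ)` makes the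
determinant exactly `1`.
-/

namespace Ideal

variable {R : Type*} [CommRing R] [IsDedekindDomain R]

theorem exists_sub_mem_isCoprime_span_singleton {I N : Ideal R} (hN : N ≠ ⊥) {a : R}
    (ha : IsCoprime (span {a}) (N ⊔ I)) : ∃ x, x - a ∈ I ∧ IsCoprime (span {x}) N := by
  classical
  set Q := ∏ p ∈ (UniqueFactorizationMonoid.normalizedFactors N).toFinset with ¬I ≤ p, p
  have hIQ : IsCoprime I Q := IsCoprime.prod_right fun p hp => by
    obtain ⟨hpN, hIp⟩ := Finset.mem_filter.mp hp
    obtain ⟨hp, hNp⟩ := (mem_normalizedFactors_iff hN).mp (Multiset.mem_toFinset.mp hpN)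
    have hpmax := hp.isMaximal (ne_bot_of_le_ne_bot hN hNp)
    exact isCoprime_iff_codisjoint.mpr (hpmax.out.not_le_iff_codisjoint.mp hIp).symm
  obtain ⟨i, hi, q, hq, hiq⟩ := hIQ.exists
  -- `x ≡ a` modulo `I` and `x ≡ 1` modulo every prime of `N` not containing `I`
  refine ⟨a * q + i, ?_, coprime_of_no_prime_ge fun P hxP hNP hP => ?_⟩
  · rw [show a * q + i - a = (1 - a) * i by linear_combination a * hiq]
    exact I.mul_mem_left _ hi
  have hx : a * q + i ∈ P := hxP (mem_span_singleton_self _)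
  by_cases hIP : I ≤ P
  · have haP : a ∈ P := by
      rw [show a = a * q + i - (1 - a) * i by linear_combination -a * hiq]
      exact P.sub_mem hx (hIP (I.mul_mem_left _ hi))
    exact hP.ne_top (top_le_iff.mp (ha.sup_eq ▸
      sup_le ((span_singleton_le_iff_mem P).mpr haP) (sup_le hNP hIP)))
  · have hQP : Q ≤ P := le_of_dvd (Finset.dvd_prod_of_mem _ (Finset.mem_filter.mpr
      ⟨Multiset.mem_toFinset.mpr ((mem_normalizedFactors_iff hN).mpr ⟨hP, hNP⟩), hIP⟩))
    refine hP.ne_top ((eq_top_iff_one P).mpr ?_)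
    rw [show (1 : R) = a * q + i - (a - 1) * q by linear_combination -hiq]
    exact P.sub_mem hx (P.mul_mem_left _ (hQP hq))

end Ideal

namespace FractionalIdeal

instance {R P : Type*} [CommRing R] [CommRing P] [Algebra R P] {S : Submonoid R} :
    AddSubgroupClass (FractionalIdeal S P) P where
  add_mem {I} := (I : Submodule R P).add_mem
  zero_mem I := (I : Submodule R P).zero_mem
  neg_mem {I} := (I : Submodule R P).neg_mem

theorem exists_ne_zero_sub_mem {R P : Type*} [CommRing R] [CommRing P] [Algebra R P]
    {S : Submonoid R} {A B : FractionalIdeal S P} (hA : A ≠ 0) (hAB : A ≤ B) {a : P}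
    (ha : a ∈ B) : ∃ c ∈ B, c ≠ 0 ∧ c - a ∈ A := by
  by_cases ha0 : a = 0
  · obtain ⟨c, hc, hc0⟩ : ∃ c ∈ A, c ≠ 0 := by simpa [eq_zero_iff] using hA
    exact ⟨c, hAB hc, hc0, by rwa [ha0, sub_zero]⟩
  · exact ⟨a, ha, ha0, by rw [sub_self]; exact zero_mem A⟩

variable {R K : Type*} [CommRing R] [Field K] [Algebra R K]

theorem exists_det_eq_one_of_mul_add_mul_eq_one {Jh : FractionalIdeal R⁰ K} {I : Ideal R}
    {c : K} {x a₂₂ u : R} {a₂₁ w : K} (h₂₁ : a₂₁ ∈ Jh) (hw : w ∈ Jh)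
    (hxu : algebraMap R K x * algebraMap R K u + c * w = 1)
    (hdet : algebraMap R K x * algebraMap R K a₂₂ - c * a₂₁ - 1 ∈ (I : FractionalIdeal R⁰ K)) :
    ∃ (b₂₂ : R) (b₂₁ : K), b₂₁ ∈ Jh ∧ algebraMap R K x * algebraMap R K b₂₂ - c * b₂₁ = 1 ∧
      algebraMap R K b₂₂ - algebraMap R K a₂₂ ∈ (I : FractionalIdeal R⁰ K) ∧
      b₂₁ - a₂₁ ∈ (I : FractionalIdeal R⁰ K) * Jh := by
  obtain ⟨δ, hδ, hδeq⟩ := (mem_coeIdeal _).mp hdet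
  have hδw : algebraMap R K δ * w ∈ (I : FractionalIdeal R⁰ K) * Jh :=
    mul_mem_mul (mem_coeIdeal_of_mem R⁰ hδ) hw
  refine ⟨a₂₂ - u * δ, a₂₁ + algebraMap R K δ * w, ?_, ?_, ?_, ?_⟩
  · have hIJh : (I : FractionalIdeal R⁰ K) * Jh ≤ Jh := mul_le_of_le_one_left' coeIdeal_le_one
    exact add_mem h₂₁ (hIJh hδw)
  · rw [map_sub, map_mul]
    linear_combination -hδeq - algebraMap R K δ * hxu
  · rw [map_sub, sub_sub_cancel_left, ← map_neg]
    exact mem_coeIdeal_of_mem R⁰ (I.neg_mem (I.mul_mem_left u hδ))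
  · rwa [add_sub_cancel_left]

variable [IsFractionRing R K]

theorem isCoprime_span_singleton_sup {Jh : FractionalIdeal R⁰ K} {I N : Ideal R} {c : K}
    (hN : (N : FractionalIdeal R⁰ K) = spanSingleton R⁰ c * Jh) {a₁₁ a₂₂ : R} {a₂₁ : K}
    (h₂₁ : a₂₁ ∈ Jh)
    (hdet : algebraMap R K a₁₁ * algebraMap R K a₂₂ - c * a₂₁ - 1 ∈ (I : FractionalIdeal R⁰ K)) :
    IsCoprime (Ideal.span {a₁₁}) (N ⊔ I) := by
  obtain ⟨ν, hν, hνeq⟩ := (mem_coeIdeal _).mp (hN ▸ mul_mem_mul (mem_spanSingleton_self _ c) h₂₁)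
  obtain ⟨ε, hε, hεeq⟩ := (mem_coeIdeal _).mp hdet
  have h1 : a₁₁ * a₂₂ - (ν + ε) = 1 := IsFractionRing.injective R K <| by
    simp only [map_sub, map_add, map_mul, map_one, hνeq, hεeq]
    ring
  exact Ideal.isCoprime_iff_exists.mpr
    ⟨_, Ideal.mul_mem_right _ _ (Ideal.mem_span_singleton_self _), _, (N ⊔ I).neg_mem (Submodule.add_mem_sup hν hε), by rw [← sub_eq_add_neg, h1]⟩

theorem exists_mul_add_mul_eq_one {Jh : FractionalIdeal R⁰ K} {N : Ideal R} {c : K}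
    (hN : (N : FractionalIdeal R⁰ K) = spanSingleton R⁰ c * Jh) {x : R}
    (hx : IsCoprime (Ideal.span {x}) N) :
    ∃ u : R, ∃ w ∈ Jh, algebraMap R K x * algebraMap R K u + c * w = 1 := by
  obtain ⟨s, hs, n, hn, hsn⟩ := hx.exists
  obtain ⟨u, rfl⟩ := Ideal.mem_span_singleton'.mp hs
  obtain ⟨w, hw, hnw⟩ := mem_singleton_mul.mp (hN ▸ mem_coeIdeal_of_mem R⁰ hn)
  refine ⟨u, w, hw, ?_⟩
  rw [← hnw, ← map_mul, ← map_add, mul_comm, hsn, map_one]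

theorem exists_lift_det_eq_one [IsDedekindDomain R] {J Jh : FractionalIdeal R⁰ K} (hJ : J ≠ 0)
    (hJh : Jh ≠ 0) (hJJh : J * Jh ≤ 1) {I : Ideal R} (hI : I ≠ ⊥) {a₁₁ a₂₂ : R} {a₁₂ a₂₁ : K}
    (h₁₂ : a₁₂ ∈ J) (h₂₁ : a₂₁ ∈ Jh)
    (hdet : algebraMap R K a₁₁ * algebraMap R K a₂₂ - a₁₂ * a₂₁ - 1 ∈
      (I : FractionalIdeal R⁰ K)) :
    ∃ (b₁₁ b₂₂ : R) (b₁₂ b₂₁ : K), b₁₂ ∈ J ∧ b₂₁ ∈ Jh ∧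
      algebraMap R K b₁₁ * algebraMap R K b₂₂ - b₁₂ * b₂₁ = 1 ∧
      algebraMap R K b₁₁ - algebraMap R K a₁₁ ∈ (I : FractionalIdeal R⁰ K) ∧
      algebraMap R K b₂₂ - algebraMap R K a₂₂ ∈ (I : FractionalIdeal R⁰ K) ∧
      b₁₂ - a₁₂ ∈ (I : FractionalIdeal R⁰ K) * J ∧
      b₂₁ - a₂₁ ∈ (I : FractionalIdeal R⁰ K) * Jh := by
  obtain ⟨c, hcJ, hc0, hca⟩ := exists_ne_zero_sub_mem (mul_ne_zero (coeIdeal_ne_zero.mpr hI) hJ)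
    (mul_le_of_le_one_left' coeIdeal_le_one) h₁₂
  have hdetc : algebraMap R K a₁₁ * algebraMap R K a₂₂ - c * a₂₁ - 1 ∈
      (I : FractionalIdeal R⁰ K) := by
    have hIJJh : (I : FractionalIdeal R⁰ K) * J * Jh ≤ I := by
      rw [mul_assoc]; exact mul_le_of_le_one_right' hJJh
    convert sub_mem hdet (hIJJh (mul_mem_mul hca h₂₁)) using 1
    ring
  obtain ⟨N, hN⟩ : ∃ N : Ideal R, (N : FractionalIdeal R⁰ K) = spanSingleton R⁰ c * Jh :=
    le_one_iff_exists_coeIdeal.mp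
    ((mul_left_mono (spanSingleton_le_iff_mem.mpr hcJ)).trans hJJh)
  have hN0 : N ≠ ⊥ := by
    rw [← coeIdeal_ne_zero (K := K), hN]
    exact mul_ne_zero (spanSingleton_ne_zero_iff.mpr hc0) hJh
  obtain ⟨x, hxa, hx⟩ := Ideal.exists_sub_mem_isCoprime_span_singleton hN0
    (isCoprime_span_singleton_sup hN h₂₁ hdetc)
  have hxa' : algebraMap R K x - algebraMap R K a₁₁ ∈ (I : FractionalIdeal R⁰ K) := by
    rw [← map_sub]; exact mem_coeIdeal_of_mem R⁰ hxa
  obtain ⟨u, w, hw, hxu⟩ := exists_mul_add_mul_eq_one hN hx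
  have hdetx : algebraMap R K x * algebraMap R K a₂₂ - c * a₂₁ - 1 ∈
      (I : FractionalIdeal R⁰ K) := by
    convert add_mem hdetc (mem_coeIdeal_of_mem R⁰ (I.mul_mem_right a₂₂ hxa)) using 1
    rw [map_mul, map_sub]
    ring
  obtain ⟨b₂₂, b₂₁, hb₂₁, hdet₁, hb₂₂a, hb₂₁a⟩ :=
    exists_det_eq_one_of_mul_add_mul_eq_one h₂₁ hw hxu hdetx
  exact ⟨x, b₂₂, c, b₂₁, hcJ, hb₂₁, hdet₁, hxa', hb₂₂a, hca, hb₂₁a⟩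

end FractionalIdeal

theorem stmt_5_general (F : Type*) [Field F] [NumberField F]
    (J Jh : FractionalIdeal (𝓞 F)⁰ F) (hJ : J ≠ 0) (hJh : Jh ≠ 0)
    (hJJh : J * Jh ≤ 1)
    (I : Ideal (𝓞 F)) (hI : I ≠ ⊥)
    (a₁₁ a₂₂ : 𝓞 F) (a₁₂ a₂₁ : F) (h₁₂ : a₁₂ ∈ J) (h₂₁ : a₂₁ ∈ Jh)
    (hdet : (a₁₁ : F) * (a₂₂ : F) - a₁₂ * a₂₁ - 1 ∈
      (I : FractionalIdeal (𝓞 F)⁰ F)) :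
    ∃ (b₁₁ b₂₂ : 𝓞 F) (b₁₂ b₂₁ : F),
      b₁₂ ∈ J ∧ b₂₁ ∈ Jh ∧
      (b₁₁ : F) * (b₂₂ : F) - b₁₂ * b₂₁ = 1 ∧
      (b₁₁ : F) - (a₁₁ : F) ∈ (I : FractionalIdeal (𝓞 F)⁰ F) ∧
      (b₂₂ : F) - (a₂₂ : F) ∈ (I : FractionalIdeal (𝓞 F)⁰ F) ∧
      b₁₂ - a₁₂ ∈ (I : FractionalIdeal (𝓞 F)⁰ F) * J ∧
      b₂₁ - a₂₁ ∈ (I : FractionalIdeal (𝓞 F)⁰ F) * Jh := by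
  simp only [RingOfIntegers.coe_eq_algebraMap] at hdet ⊢
  exact FractionalIdeal.exists_lift_det_eq_one hJ hJh hJJh hI h₁₂ h₂₁ hdet

/-- Let `R` be the ring of integers of a number field `F`, `J`, `Ĵ` fractional
ideals with `J·Ĵ ⊆ R`, and `I ⊆ J·Ĵ` a non-zero ideal of `R`.  Surjectivity of
the reduction map `Γ(J,Ĵ) → Γ̄_I(J,Ĵ)`: every matrix `(a₁₁,a₁₂;a₂₁,a₂₂)` with
`a₁₁,a₂₂ ∈ R`, `a₁₂ ∈ J`, `a₂₁ ∈ Ĵ` whose determinant is `1` modulo `I` lifts,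
modulo `(I, IJ, IĴ, I)`, to a matrix in `Γ(J,Ĵ)`, i.e. with determinant
exactly `1`. -/
theorem stmt_5 (F : Type*) [Field F] [NumberField F]
    (J Jh : FractionalIdeal (𝓞 F)⁰ F) (hJ : J ≠ 0) (hJh : Jh ≠ 0)
    (hJJh : J * Jh ≤ 1)
    (I : Ideal (𝓞 F)) (hI : I ≠ ⊥)
    (hIJJh : (I : FractionalIdeal (𝓞 F)⁰ F) ≤ J * Jh)
    (a₁₁ a₂₂ : 𝓞 F) (a₁₂ a₂₁ : F) (h₁₂ : a₁₂ ∈ J) (h₂₁ : a₂₁ ∈ Jh)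
    (hdet : (a₁₁ : F) * (a₂₂ : F) - a₁₂ * a₂₁ - 1 ∈
      (I : FractionalIdeal (𝓞 F)⁰ F)) :
    ∃ (b₁₁ b₂₂ : 𝓞 F) (b₁₂ b₂₁ : F),
      b₁₂ ∈ J ∧ b₂₁ ∈ Jh ∧
      (b₁₁ : F) * (b₂₂ : F) - b₁₂ * b₂₁ = 1 ∧
      (b₁₁ : F) - (a₁₁ : F) ∈ (I : FractionalIdeal (𝓞 F)⁰ F) ∧
      (b₂₂ : F) - (a₂₂ : F) ∈ (I : FractionalIdeal (𝓞 F)⁰ F) ∧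
      b₁₂ - a₁₂ ∈ (I : FractionalIdeal (𝓞 F)⁰ F) * J ∧
      b₂₁ - a₂₁ ∈ (I : FractionalIdeal (𝓞 F)⁰ F) * Jh :=
  stmt_5_general F J Jh hJ hJh hJJh I hI a₁₁ a₂₂ a₁₂ a₂₁ h₁₂ h₂₁ hdet
end

section
/- Let R be a Dedekind domain (ring of integers of a number field), J a fractional ideal, and a₁₂ ∈ J, a₁₁ ∈ R non-zero elements such that R·a₁₁ + J·Ĵ is comaximal in the appropriate sense: if a₁₁ is relatively prime to both J/Ra₁₂ and R/JĴ (where Ĵ is a fractional ideal with JĴ ⊆ R), then R = R·a₁₁ + Ĵ·a₁₂. -/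
open FractionalIdeal nonZeroDivisors

/-! Multiplying `a₁₁·J + R·a₁₂ = J` by `Ĵ` gives `J·Ĵ = a₁₁·J·Ĵ + Ĵ·a₁₂ ⊆ R·a₁₁ + Ĵ·a₁₂`, so
`R = R·a₁₁ + J·Ĵ ⊆ R·a₁₁ + Ĵ·a₁₂ ⊆ R`. -/

namespace FractionalIdeal

variable {R : Type*} [CommRing R] {S : Submonoid R} {P : Type*} [CommRing P] [Algebra R P]
  {I J J' L : FractionalIdeal S P}

theorem mul_le_add_mul_of_mul_add_eq (hJ : I * J + L = J) (hJJ' : J * J' ≤ 1) :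
    J * J' ≤ I + J' * L :=
  calc J * J' = I * (J * J') + J' * L := by
        conv_lhs => rw [← hJ]
        ring
    _ ≤ I + J' * L := by
        rw [← sup_eq_add, ← sup_eq_add]
        exact sup_le_sup_right (mul_le_of_le_one_right' hJJ') _

theorem add_mul_eq_one_of_mul_add_eq (hJ : I * J + L = J) (hIJ : I + J * J' = 1) :
    I + J' * L = 1 := by
  have hL : L ≤ J := hJ ▸ le_add_self
  have hI : I ≤ 1 := hIJ ▸ le_self_add
  have hJJ' : J * J' ≤ 1 := hIJ ▸ le_add_self
  refine le_antisymm ?_ ?_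
  · rw [← sup_eq_add]
    exact sup_le hI (((mul_le_mul_right hL J').trans_eq (mul_comm J' J)).trans hJJ')
  · rw [← hIJ, ← sup_eq_add, ← sup_eq_add]
    exact sup_le le_sup_left (mul_le_add_mul_of_mul_add_eq hJ hJJ')

end FractionalIdeal

theorem stmt_6_general (R K : Type*) [CommRing R] [Field K]
    [Algebra R K] [IsFractionRing R K]
    (J Jh : FractionalIdeal R⁰ K)
    (a₁₂ : K)
    (a₁₁ : R)
    (hprime₁ : spanSingleton R⁰ (algebraMap R K a₁₁) * J +
      spanSingleton R⁰ a₁₂ = J)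
    (hprime₂ : spanSingleton R⁰ (algebraMap R K a₁₁) + J * Jh = 1) :
    spanSingleton R⁰ (algebraMap R K a₁₁) + Jh * spanSingleton R⁰ a₁₂ = 1 :=
  add_mul_eq_one_of_mul_add_eq hprime₁ hprime₂

/-- Let `R` be a Dedekind domain with fraction field `K`, `J`, `Ĵ` fractional
ideals with `J·Ĵ ⊆ R`, `a₁₂ ∈ J` and `a₁₁ ∈ R` non-zero.  Assume `a₁₁` is
relatively prime to the modules `J/R·a₁₂` and `R/J·Ĵ` (i.e. multiplication by
`a₁₁` is surjective on them: `a₁₁·J + R·a₁₂ = J` and `a₁₁·R + J·Ĵ = R`).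
Then `R·a₁₁ + Ĵ·a₁₂ = R`. -/
theorem stmt_6 (R K : Type*) [CommRing R] [IsDedekindDomain R] [Field K]
    [Algebra R K] [IsFractionRing R K]
    (J Jh : FractionalIdeal R⁰ K) (hJ : J ≠ 0) (hJh : Jh ≠ 0)
    (hJJh : J * Jh ≤ 1)
    (a₁₂ : K) (h₁₂ : a₁₂ ∈ J) (h₁₂0 : a₁₂ ≠ 0)
    (a₁₁ : R) (h₁₁0 : a₁₁ ≠ 0)
    (hprime₁ : spanSingleton R⁰ (algebraMap R K a₁₁) * J +
      spanSingleton R⁰ a₁₂ = J)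
    (hprime₂ : spanSingleton R⁰ (algebraMap R K a₁₁) + J * Jh = 1) :
    spanSingleton R⁰ (algebraMap R K a₁₁) + Jh * spanSingleton R⁰ a₁₂ = 1 :=
  stmt_6_general R K J Jh a₁₂ a₁₁ hprime₁ hprime₂
end

section
/- Let G̃ be a central extension of a group G with central kernel generated by ε, and suppose G̃ is perfect (equals its own commutator subgroup). Then for every prime p, the push-forward of the extension along ℤ → ℤ/pℤ (sending ε to a generator) is a non-trivial central extension of G by ℤ/pℤ, provided ε has infinite order in G̃. -/
/-!
A section `s` of the projection `π : G̃/⟨εᵖ⟩ → G̃/⟨ε⟩` splits off the central kernel `⟨ε⟩/⟨εᵖ⟩`,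
so for each `x` the element `s (π x)` differs from `x` by a central factor. Commutators do not
see central factors, hence `s ∘ π` fixes every commutator, and therefore everything because
`G̃/⟨εᵖ⟩` is perfect. Then `π` is injective, so `ε ∈ ⟨εᵖ⟩`, which is impossible for an element
of infinite order unless `p = 1`.
-/

open Subgroup
open scoped commutatorElement

section

variable {G H : Type*} [Group G] [Group H]

theorem commutatorElement_mul_mem_center (a b : G) {z w : G} (hz : z ∈ center G)
    (hw : w ∈ center G) : ⁅a * z, b * w⁆ = ⁅a, b⁆ := by
  rw [mem_center_iff] at hz hw
  simp only [commutatorElement_def, mul_inv_rev]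
  calc a * z * (b * w) * (z⁻¹ * a⁻¹) * (w⁻¹ * b⁻¹)
      = a * (z * (b * w * z⁻¹)) * a⁻¹ * (w⁻¹ * b⁻¹) := by group
    _ = a * (b * w * z⁻¹ * z) * a⁻¹ * (w⁻¹ * b⁻¹) := by rw [hz]
    _ = a * b * (w * (a⁻¹ * w⁻¹)) * b⁻¹ := by group
    _ = a * b * (a⁻¹ * w⁻¹ * w) * b⁻¹ := by rw [hw]
    _ = a * b * a⁻¹ * b⁻¹ := by group

theorem map_mem_center_of_surjective {f : G →* H} (hf : Function.Surjective f) {z : G}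
    (hz : z ∈ center G) : f z ∈ center H := by
  rw [mem_center_iff] at hz ⊢
  intro y
  obtain ⟨x, rfl⟩ := hf y
  rw [← map_mul, hz, map_mul]

theorem MonoidHom.ker_eq_bot_of_comp_eq_id_of_isPerfect [Group.IsPerfect G] (f : G →* H)
    (s : H →* G) (hs : f.comp s = .id H) (hker : f.ker ≤ center G) : f.ker = ⊥ := by
  have hsf_mul (x : G) : s (f x) = x * (x⁻¹ * s (f x)) := by group
  have hsf_central (x : G) : x⁻¹ * s (f x) ∈ center G := by
    apply hker
    rw [MonoidHom.mem_ker, map_mul, map_inv, ← f.comp_apply s, hs, MonoidHom.id_apply,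
      inv_mul_cancel]
  have hfix : _root_.commutator G ≤ MonoidHom.eqLocus (s.comp f) (.id G) := by
    rw [_root_.commutator, commutator_le]
    intro a _ b _
    change s (f ⁅a, b⁆) = ⁅a, b⁆
    rw [map_commutatorElement, map_commutatorElement, hsf_mul a, hsf_mul b,
      commutatorElement_mul_mem_center a b (hsf_central a) (hsf_central b)]
  rw [eq_bot_iff]
  intro x hx
  have hx' : s (f x) = x := hfix (Group.IsPerfect.mem_commutator (g := x))
  rw [MonoidHom.mem_ker] at hx
  rw [mem_bot, ← hx', hx, map_one]

theorem notMem_zpowers_pow_of_not_isOfFinOrder {x : G} (hx : ¬IsOfFinOrder x) {n : ℕ}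
    (hn : n ≠ 1) : x ∉ zpowers (x ^ n) := by
  rintro ⟨k, hk : (x ^ n) ^ k = x⟩
  have hnk : (n : ℤ) * k = 1 := by
    apply injective_zpow_iff_not_isOfFinOrder.mpr hx
    change x ^ ((n : ℤ) * k) = x ^ (1 : ℤ)
    rw [zpow_mul, zpow_natCast, hk, zpow_one]
  exact hn (by exact_mod_cast Int.eq_one_of_mul_eq_one_right (Int.natCast_nonneg n) hnk)

end

/-- Let `G̃` be a perfect group, `ε` a central element of infinite order, with
`G = G̃/⟨ε⟩`.  Then for every prime `p` the push-forward of the central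
extension `1 → ⟨ε⟩ → G̃ → G → 1` along `ℤ → ℤ/pℤ`, i.e. the extension
`1 → ⟨ε⟩/⟨εᵖ⟩ → G̃/⟨εᵖ⟩ → G → 1`, does not split: there is no section of the
projection `G̃/⟨εᵖ⟩ → G̃/⟨ε⟩`. -/
theorem stmt_17 {G : Type*} [Group G] (ε : G)
    (hcent : ε ∈ Subgroup.center G)
    (hinf : ∀ n : ℤ, ε ^ n = 1 → n = 0)
    (hperf : commutator G = ⊤)
    (p : ℕ) (hp : p.Prime)
    [hN : (Subgroup.zpowers (ε ^ p)).Normal]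
    [hZ : (Subgroup.zpowers ε).Normal]
    (hle : Subgroup.zpowers (ε ^ p) ≤
      (Subgroup.zpowers ε).comap (MonoidHom.id G)) :
    ¬ ∃ s : (G ⧸ Subgroup.zpowers ε) →* (G ⧸ Subgroup.zpowers (ε ^ p)),
      (QuotientGroup.map (Subgroup.zpowers (ε ^ p)) (Subgroup.zpowers ε)
          (MonoidHom.id G) hle).comp s =
        MonoidHom.id (G ⧸ Subgroup.zpowers ε) := by
  rintro ⟨s, hs⟩
  have : Group.IsPerfect G := ⟨hperf⟩
  set π := QuotientGroup.map (zpowers (ε ^ p)) (zpowers ε) (MonoidHom.id G) hle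
  have hker : π.ker = zpowers (ε : G ⧸ zpowers (ε ^ p)) := by
    rw [QuotientGroup.ker_map, comap_id, MonoidHom.map_zpowers]
    rfl
  have hker_central : π.ker ≤ center _ := by
    rw [hker, zpowers_le]
    exact map_mem_center_of_surjective (QuotientGroup.mk'_surjective _) hcent
  have hε : (ε : G ⧸ zpowers (ε ^ p)) = 1 := by
    rw [← mem_bot, ← π.ker_eq_bot_of_comp_eq_id_of_isPerfect s hs hker_central, hker]
    exact mem_zpowers _
  have hε_fin : ¬IsOfFinOrder ε := fun h ↦ by
    obtain ⟨n, hn, hεn⟩ := isOfFinOrder_iff_zpow_eq_one.mp h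
    exact hn (hinf n hεn)
  exact notMem_zpowers_pow_of_not_isOfFinOrder hε_fin hp.ne_one
    ((QuotientGroup.eq_one_iff ε).mp hε)
end
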